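/- Let G be the group with presentation ⟨a, b, x | ab = x², a² = 1, b³ = 1⟩. Then for every surjective group homomorphism φ from G onto the additive group ℤ/12ℤ, there exists a unit k ∈ (ℤ/12ℤ)ˣ such that (φ(a), φ(b), φ(x)) = (6k, 4k, 5k). In particular there are exactly four such homomorphisms, all equivalent up to an automorphism of ℤ/12ℤ. -/

import Mathlib

/-- Relations for `⟨a,b,x ∣ ab = x², a² = 1, b³ = 1⟩`, the orbifold fundamental
group of `ℝP²(2,3)`.  Generators: `a = 0`, `b = 1`, `x = 2`. -/
def relsRP223 : Set (FreeGroup (Fin 3)) :=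
  {FreeGroup.of 0 * FreeGroup.of 1 * ((FreeGroup.of 2) ^ 2)⁻¹,
    (FreeGroup.of 0) ^ 2, (FreeGroup.of 1) ^ 3}

private lemma keyZ : ∀ A B X : ZMod 12, A + B = X + X → A + A = 0 → B + B + B = 0 →
    (∀ c : ZMod 12, c*A = 0 → c*B = 0 → c*X = 0 → c = 0) →
    ∃ k : (ZMod 12)ˣ, A = 6*k ∧ B = 4*k ∧ X = 5*k := by decide

private lemma part1 :
    ∀ φ : PresentedGroup relsRP223 →* Multiplicative (ZMod 12),
      Function.Surjective φ →
        ∃ k : (ZMod 12)ˣ,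
          Multiplicative.toAdd (φ (PresentedGroup.of 0)) = 6 * (k : ZMod 12) ∧
          Multiplicative.toAdd (φ (PresentedGroup.of 1)) = 4 * (k : ZMod 12) ∧
          Multiplicative.toAdd (φ (PresentedGroup.of 2)) = 5 * (k : ZMod 12) := by
  intro φ hφ
  set A := Multiplicative.toAdd (φ (PresentedGroup.of 0)) with hA
  set B := Multiplicative.toAdd (φ (PresentedGroup.of 1)) with hB
  set X := Multiplicative.toAdd (φ (PresentedGroup.of 2)) with hX
  have hrel : ∀ r ∈ relsRP223, φ (PresentedGroup.mk _ r) = 1 := by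
    intro r hr
    have h1 : PresentedGroup.mk relsRP223 r = 1 := by
      rw [PresentedGroup.mk_eq_one_iff]
      exact Subgroup.subset_normalClosure hr
    rw [h1, map_one]
  have e1 := hrel _ (show _ ∈ relsRP223 by left; rfl)
  have e2 := hrel _ (show _ ∈ relsRP223 by right; left; rfl)
  have e3 := hrel _ (show _ ∈ relsRP223 by right; right; rfl)
  simp only [map_mul, map_inv, map_pow] at e1 e2 e3
  change φ (PresentedGroup.of 0) * φ (PresentedGroup.of 1) * (φ (PresentedGroup.of 2) ^ 2)⁻¹ = 1 at e1
  change φ (PresentedGroup.of 0) ^ 2 = 1 at e2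
  change φ (PresentedGroup.of 1) ^ 3 = 1 at e3
  have f1 := congrArg Multiplicative.toAdd e1
  have f2 := congrArg Multiplicative.toAdd e2
  have f3 := congrArg Multiplicative.toAdd e3
  simp only [toAdd_mul, toAdd_inv, toAdd_pow, toAdd_one, ← hA, ← hB, ← hX] at f1 f2 f3
  have g1 : A + B = X + X := by
    have : (2 : ℕ) • X = X + X := two_smul ℕ X
    rw [this] at f1; linear_combination f1
  have g2 : A + A = 0 := by
    have : (2 : ℕ) • A = A + A := two_smul ℕ A
    rw [this] at f2; linear_combination f2
  have g3 : B + B + B = 0 := by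
    have h3 : (3 : ℕ) • B = B + B + B := by rw [show (3:ℕ) = 2 + 1 from rfl, add_smul, two_smul, one_smul]
    rw [h3] at f3; linear_combination f3
  have hc : ∀ c : ZMod 12, c*A = 0 → c*B = 0 → c*X = 0 → c = 0 := by
    intro c h0 h1 h2
    obtain ⟨g, hg⟩ := hφ (Multiplicative.ofAdd (1 : ZMod 12))
    have hcomp : (AddMonoidHom.toMultiplicative (AddMonoidHom.mulLeft c)).comp φ = 1 := by
      apply PresentedGroup.ext
      intro x
      fin_cases x <;>
        simp [AddMonoidHom.toMultiplicative_apply_apply, ← hA, ← hB, ← hX, h0, h1, h2]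
    have := DFunLike.congr_fun hcomp g
    simp only [MonoidHom.comp_apply, MonoidHom.one_apply, hg,
      AddMonoidHom.toMultiplicative_apply_apply, AddMonoidHom.coe_mulLeft] at this
    have := congrArg Multiplicative.toAdd this
    simpa using this
  exact keyZ A B X g1 g2 g3 hc
private def fgen (u : (ZMod 12)ˣ) : Fin 3 → Multiplicative (ZMod 12) :=
  ![Multiplicative.ofAdd (6 * (u : ZMod 12)), Multiplicative.ofAdd (4 * (u : ZMod 12)),
    Multiplicative.ofAdd (5 * (u : ZMod 12))]

private lemma fgen_rels (u : (ZMod 12)ˣ) :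
    ∀ r ∈ relsRP223, FreeGroup.lift (fgen u) r = 1 := by
  intro r hr
  rcases hr with h | h | h <;> subst h <;>
    · simp only [map_mul, map_inv, map_pow, FreeGroup.lift_apply_of, fgen,
        Matrix.cons_val_zero, Matrix.cons_val_one, Matrix.head_cons, Matrix.cons_val_two,
        Matrix.tail_cons]
      rw [show (1 : Multiplicative (ZMod 12)) = Multiplicative.ofAdd 0 from rfl]
      rw [← Multiplicative.toAdd.injective.eq_iff]
      simp only [toAdd_mul, toAdd_inv, toAdd_pow, toAdd_ofAdd, nsmul_eq_mul]
      push_cast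
      ring_nf
      try simp [show (12 : ZMod 12) = 0 by decide]

private def Phi (u : (ZMod 12)ˣ) : PresentedGroup relsRP223 →* Multiplicative (ZMod 12) :=
  PresentedGroup.toGroup (fgen_rels u)

private lemma Phi_of0 (u : (ZMod 12)ˣ) :
    Phi u (PresentedGroup.of 0) = Multiplicative.ofAdd (6 * (u : ZMod 12)) :=
  PresentedGroup.toGroup.of _
private lemma Phi_of1 (u : (ZMod 12)ˣ) :
    Phi u (PresentedGroup.of 1) = Multiplicative.ofAdd (4 * (u : ZMod 12)) :=
  PresentedGroup.toGroup.of _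
private lemma Phi_of2 (u : (ZMod 12)ˣ) :
    Phi u (PresentedGroup.of 2) = Multiplicative.ofAdd (5 * (u : ZMod 12)) :=
  PresentedGroup.toGroup.of _

private lemma Phi_surj (u : (ZMod 12)ˣ) : Function.Surjective (Phi u) := by
  intro y
  set m : ℕ := (Multiplicative.toAdd y * ((u⁻¹ : (ZMod 12)ˣ) : ZMod 12)).val with hm
  refine ⟨(PresentedGroup.of 0 * (PresentedGroup.of 2)⁻¹) ^ m, ?_⟩
  have hbase : Phi u (PresentedGroup.of 0 * (PresentedGroup.of 2)⁻¹)
      = Multiplicative.ofAdd (u : ZMod 12) := by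
    rw [map_mul, map_inv, Phi_of0, Phi_of2, ← Multiplicative.toAdd.injective.eq_iff]
    simp only [toAdd_mul, toAdd_inv, toAdd_ofAdd]
    ring
  rw [map_pow, hbase, ← Multiplicative.toAdd.injective.eq_iff]
  simp only [toAdd_pow, toAdd_ofAdd, nsmul_eq_mul, hm]
  rw [ZMod.natCast_val, ZMod.cast_id]
  simp [mul_assoc]
private lemma Phi_inj : Function.Injective Phi := by
  intro u v h
  have h2 := congrArg (fun ψ => Multiplicative.toAdd (ψ (PresentedGroup.of 2))) h
  simp only [Phi_of2, toAdd_ofAdd] at h2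
  have : (u : ZMod 12) = (v : ZMod 12) := by
    have := congrArg (fun t => (5 : ZMod 12) * t) h2
    simpa [← mul_assoc, show (5 : ZMod 12) * 5 = 1 by decide] using this
  exact Units.ext this

example : True := trivial

/-- For every surjective homomorphism `φ` from
`⟨a,b,x ∣ ab = x², a² = 1, b³ = 1⟩` onto `ℤ/12ℤ`, there is a unit `k` of
`ℤ/12ℤ` with `(φ(a), φ(b), φ(x)) = (6k, 4k, 5k)`; and there are exactly four
such homomorphisms, all equivalent up to an automorphism of `ℤ/12ℤ`. -/
theorem hom_RP223_to_Z12 :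
    (∀ φ : PresentedGroup relsRP223 →* Multiplicative (ZMod 12),
      Function.Surjective φ →
        ∃ k : (ZMod 12)ˣ,
          Multiplicative.toAdd (φ (PresentedGroup.of 0)) = 6 * (k : ZMod 12) ∧
          Multiplicative.toAdd (φ (PresentedGroup.of 1)) = 4 * (k : ZMod 12) ∧
          Multiplicative.toAdd (φ (PresentedGroup.of 2)) = 5 * (k : ZMod 12)) ∧
    {φ : PresentedGroup relsRP223 →* Multiplicative (ZMod 12) |
        Function.Surjective φ}.ncard = 4 := by
  refine ⟨part1, ?_⟩
  have hset : {φ : PresentedGroup relsRP223 →* Multiplicative (ZMod 12) |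
      Function.Surjective φ} = Set.range Phi := by
    ext φ
    constructor
    · intro hφ
      obtain ⟨k, h0, h1, h2⟩ := part1 φ hφ
      refine ⟨k, ?_⟩
      apply PresentedGroup.ext
      intro x
      fin_cases x
      · show Phi k (PresentedGroup.of 0) = φ (PresentedGroup.of 0)
        rw [Phi_of0, ← Multiplicative.toAdd.injective.eq_iff, toAdd_ofAdd, h0]
      · show Phi k (PresentedGroup.of 1) = φ (PresentedGroup.of 1)
        rw [Phi_of1, ← Multiplicative.toAdd.injective.eq_iff, toAdd_ofAdd, h1]
      · show Phi k (PresentedGroup.of 2) = φ (PresentedGroup.of 2)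
        rw [Phi_of2, ← Multiplicative.toAdd.injective.eq_iff, toAdd_ofAdd, h2]
    · rintro ⟨u, rfl⟩
      exact Phi_surj u
  rw [hset, ← Set.image_univ, Set.ncard_image_of_injective _ Phi_inj, Set.ncard_univ,
    Nat.card_eq_fintype_card, ZMod.card_units_eq_totient]
  decide
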